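/- arXiv:2509.19908 — 2 statements merged into one kernel-verified Lean document; each statement's English description precedes it below -/
import Mathlib

section
/- For a finite alphabet X = {x₀, …, x_m} and any integer k ≥ 0, the characteristic polynomial of all words of length k satisfies char(X^k) = Σ over tuples (r₀,…,r_m) of nonnegative integers summing to k of x₀^{r₀} ⧢ x₁^{r₁} ⧢ ⋯ ⧢ x_m^{r_m}, where x_i^{r} denotes the concatenation power. -/
/-- The multiset of all shuffles of two words (with multiplicity), so that the
coefficient of a word `ν` in the shuffle product `ξ₁ ⧢ ξ₂` is the multiplicity
of `ν` in `shuffles ξ₁ ξ₂`. -/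
def shuffles {α : Type*} : List α → List α → Multiset (List α)
  | [], ys => {ys}
  | x :: xs, [] => {x :: xs}
  | x :: xs, y :: ys =>
      (shuffles xs (y :: ys)).map (x :: ·) + (shuffles (x :: xs) ys).map (y :: ·)

/-- Iterated shuffle product of a list of words, as a multiset of words with
multiplicity (the coefficients of ξ₁ ⧢ ⋯ ⧢ ξₙ). -/
def shufflesMany {α : Type*} : List (List α) → Multiset (List α)
  | [] => {[]}
  | w :: ws => (shufflesMany ws).bind (shuffles w)

lemma count_map_cons {α : Type*} [DecidableEq α] (x c : α) (νs : List α)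
    (S : Multiset (List α)) :
    (S.map (x :: ·)).count (c :: νs) = if c = x then S.count νs else 0 := by
  split_ifs with h
  · subst h
    exact Multiset.count_map_eq_count' _ _ (fun a b hab => by simpa using hab) _
  · rw [Multiset.count_eq_zero]
    intro hm
    obtain ⟨μ, -, hμ⟩ := Multiset.mem_map.1 hm
    exact h (by injection hμ with h1 h2; exact h1.symm)

lemma count_map_cons_nil {α : Type*} [DecidableEq α] (x : α) (S : Multiset (List α)) :
    (S.map (x :: ·)).count [] = 0 := by
  rw [Multiset.count_eq_zero]
  intro hm
  obtain ⟨μ, -, hμ⟩ := Multiset.mem_map.1 hm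
  simp at hμ

lemma count_shuffles_replicate {α : Type*} [DecidableEq α] (a : α) :
    ∀ (ν : List α) (n : ℕ) (ξ : List α), a ∉ ξ →
    (shuffles (List.replicate n a) ξ).count ν =
      if ν.count a = n ∧ ν.filter (· ≠ a) = ξ then 1 else 0
  | ν, 0, ξ, hξ => by
    simp only [List.replicate_zero, shuffles, Multiset.count_singleton]
    refine (if_congr ?_ rfl rfl)
    constructor
    · rintro rfl
      refine ⟨List.count_eq_zero.2 hξ, List.filter_eq_self.2 fun b hb => ?_⟩
      simpa using fun h : b = a => hξ (h ▸ hb)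
    · rintro ⟨h1, rfl⟩
      symm
      refine List.filter_eq_self.2 fun b hb => ?_
      simpa using fun h : b = a => (List.count_eq_zero.1 h1) (h ▸ hb)
  | [], n+1, b :: ys, hξ => by
    rw [List.replicate_succ]
    simp only [shuffles, Multiset.count_add, count_map_cons_nil]
    simp
  | ν, n+1, [], hξ => by
    rw [List.replicate_succ]
    simp only [shuffles]
    rw [← List.replicate_succ, Multiset.count_singleton]
    refine (if_congr ?_ rfl rfl)
    constructor
    · rintro rfl
      simp [List.count_replicate_self, List.filter_eq_nil_iff]
    · rintro ⟨h1, h2⟩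
      have hall : ∀ b ∈ ν, b = a := by
        intro b hb
        by_contra hba
        have : b ∈ ν.filter (· ≠ a) := List.mem_filter.2 ⟨hb, by simpa using hba⟩
        rw [h2] at this
        simp at this
      have hν : ν = List.replicate ν.length a := List.eq_replicate_iff.2 ⟨rfl, hall⟩
      rw [hν, List.count_replicate_self] at h1
      rw [hν, h1]
  | c :: νs, n+1, b :: ys, hξ => by
    have hba : b ≠ a := fun h => hξ (h ▸ List.mem_cons_self)
    have hays : a ∉ ys := fun h => hξ (List.mem_cons_of_mem _ h)
    rw [List.replicate_succ]
    simp only [shuffles]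
    rw [Multiset.count_add, count_map_cons, count_map_cons, ← List.replicate_succ]
    by_cases hca : c = a
    · subst hca
      rw [if_pos rfl, if_neg (fun h => hba h.symm), add_zero,
        count_shuffles_replicate c νs n (b :: ys) hξ]
      refine (if_congr ?_ rfl rfl)
      constructor
      · rintro ⟨h1, h2⟩
        refine ⟨by rw [List.count_cons_self, h1], ?_⟩
        rw [List.filter_cons, if_neg (by simp)]
        exact h2
      · rintro ⟨h1, h2⟩
        rw [List.count_cons_self] at h1
        rw [List.filter_cons, if_neg (by simp)] at h2
        exact ⟨by omega, h2⟩
    · rw [if_neg hca]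
      by_cases hcb : c = b
      · subst hcb
        rw [if_pos rfl, count_shuffles_replicate a νs (n+1) ys hays, zero_add]
        refine (if_congr ?_ rfl rfl)
        have hfc : (c :: νs).filter (· ≠ a) = c :: νs.filter (· ≠ a) := by
          rw [List.filter_cons, if_pos (by simpa using hca)]
        constructor
        · rintro ⟨h1, h2⟩
          refine ⟨by rw [List.count_cons_of_ne hca, h1], ?_⟩
          rw [hfc, h2]
        · rintro ⟨h1, h2⟩
          rw [List.count_cons_of_ne hca] at h1
          rw [hfc] at h2
          exact ⟨h1, by injection h2⟩
      · rw [if_neg hcb, add_zero, if_neg]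
        rintro ⟨h1, h2⟩
        rw [List.filter_cons, if_pos (by simpa using hca)] at h2
        exact hcb (by injection h2)

lemma sum_map_indicator {β : Type*} [DecidableEq β] (S : Multiset β) (b : β) :
    (S.map fun x => if b = x then (1 : ℕ) else 0).sum = S.count b := by
  induction S using Multiset.induction with
  | empty => simp
  | cons x s ih => simp [Multiset.count_cons, ih, eq_comm, add_comm]

lemma count_shufflesMany {α : Type*} [DecidableEq α] :
    ∀ (is : List α) (r : α → ℕ) (ν : List α), is.Nodup →
    (shufflesMany (is.map fun i => List.replicate (r i) i)).count ν =
      if (∀ i ∈ is, ν.count i = r i) ∧ (∀ c ∈ ν, c ∈ is) then 1 else 0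
  | [], r, ν, _ => by
    simp only [List.map_nil, shufflesMany, Multiset.count_singleton]
    refine (if_congr ?_ rfl rfl)
    constructor
    · rintro rfl; simp
    · rintro ⟨-, h⟩
      cases ν with
      | nil => rfl
      | cons c cs => exact absurd (h c (List.mem_cons_self)) (by simp)
  | i :: is, r, ν, hnd => by
    have hnd' : is.Nodup := (List.nodup_cons.1 hnd).2
    have hi : i ∉ is := (List.nodup_cons.1 hnd).1
    simp only [List.map_cons, shufflesMany]
    rw [Multiset.count_bind]
    have hmem : ∀ μ ∈ shufflesMany (is.map fun j => List.replicate (r j) j),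
        i ∉ μ := by
      intro μ hμ
      have hc := count_shufflesMany is r μ hnd'
      rw [← Multiset.count_pos] at hμ
      by_contra hin
      rcases eq_or_ne (Multiset.count μ (shufflesMany (is.map fun j => List.replicate (r j) j))) 0 with h0 | h0
      · omega
      · rw [hc] at h0
        split_ifs at h0 with hcond
        · exact hi (hcond.2 i hin)
        · exact h0 rfl
    have hcongr : (Multiset.map
          (fun μ => Multiset.count ν (shuffles (List.replicate (r i) i) μ))
          (shufflesMany (is.map fun j => List.replicate (r j) j))) =
        (Multiset.map
          (fun μ => if ν.count i = r i ∧ ν.filter (· ≠ i) = μ then 1 else 0)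
          (shufflesMany (is.map fun j => List.replicate (r j) j))) := by
      refine Multiset.map_congr rfl fun μ hμ => ?_
      exact count_shuffles_replicate i ν (r i) μ (hmem μ hμ)
    rw [hcongr]
    by_cases hri : ν.count i = r i
    · have : (Multiset.map
          (fun μ => if ν.count i = r i ∧ ν.filter (· ≠ i) = μ then 1 else 0)
          (shufflesMany (is.map fun j => List.replicate (r j) j))) =
        (Multiset.map
          (fun μ => if ν.filter (· ≠ i) = μ then 1 else 0)
          (shufflesMany (is.map fun j => List.replicate (r j) j))) := by
        refine Multiset.map_congr rfl fun μ _ => by simp [hri]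
      rw [this, sum_map_indicator, count_shufflesMany is r _ hnd']
      refine (if_congr ?_ rfl rfl)
      constructor
      · rintro ⟨h1, h2⟩
        constructor
        · intro j hj
          rcases List.mem_cons.1 hj with rfl | hj'
          · exact hri
          · have : j ≠ i := fun h => hi (h ▸ hj')
            rw [← List.count_filter (p := fun x => decide (x ≠ i)) (by simpa using this)]
            exact h1 j hj'
        · intro c hc
          by_cases hci : c = i
          · exact hci ▸ List.mem_cons_self
          · exact List.mem_cons_of_mem _
              (h2 c (List.mem_filter.2 ⟨hc, by simpa using hci⟩))
      · rintro ⟨h1, h2⟩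
        constructor
        · intro j hj
          have : j ≠ i := fun h => hi (h ▸ hj)
          rw [List.count_filter (p := fun x => decide (x ≠ i)) (by simpa using this)]
          exact h1 j (List.mem_cons_of_mem _ hj)
        · intro c hc
          obtain ⟨hcν, hci⟩ := List.mem_filter.1 hc
          rcases List.mem_cons.1 (h2 c hcν) with rfl | h
          · simp at hci
          · exact h
    · have : (Multiset.map
          (fun μ => if ν.count i = r i ∧ ν.filter (· ≠ i) = μ then 1 else 0)
          (shufflesMany (is.map fun j => List.replicate (r j) j))) =
        (Multiset.map (fun _ => (0 : ℕ))
          (shufflesMany (is.map fun j => List.replicate (r j) j))) := by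
        refine Multiset.map_congr rfl fun μ _ => by simp [hri]
      rw [this, if_neg]
      · simp
      · rintro ⟨h1, -⟩
        exact hri (h1 i (List.mem_cons_self))


/-- For the alphabet `X = Fin (m+1) = {x₀, …, x_m}` and any `k ≥ 0`,
the characteristic polynomial of all words of length `k` (each word of length `k`
appearing exactly once) equals the sum over tuples `(r₀, …, r_m)` of nonnegative
integers summing to `k` of the shuffle products `x₀^{r₀} ⧢ x₁^{r₁} ⧢ ⋯ ⧢ x_m^{r_m}`
of concatenation powers. -/
theorem char_words_eq_sum_shuffles_of_powers (m k : ℕ) :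
    (Finset.univ : Finset (List.Vector (Fin (m + 1)) k)).val.map
        (fun w => w.toList) =
      ∑ r ∈ Finset.Nat.antidiagonalTuple (m + 1) k,
        shufflesMany (List.ofFn fun i : Fin (m + 1) => List.replicate (r i) i) := by
  refine Multiset.ext.2 fun ν => ?_
  rw [Multiset.count_sum']
  have hterm : ∀ r ∈ Finset.Nat.antidiagonalTuple (m + 1) k,
      Multiset.count ν (shufflesMany (List.ofFn fun i : Fin (m + 1) => List.replicate (r i) i)) =
      if r = (fun i => ν.count i) then 1 else 0 := by
    intro r hr
    rw [List.ofFn_eq_map, count_shufflesMany _ r ν (List.nodup_finRange _)]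
    have hiff : ((∀ i ∈ List.finRange (m+1), ν.count i = r i) ∧
        (∀ c ∈ ν, c ∈ List.finRange (m+1))) ↔ (r = fun i => ν.count i) := ?_
    · simp only [hiff]
    simp only [List.mem_finRange, true_implies, funext_iff]
    constructor
    · rintro ⟨h1, -⟩
      exact fun i => (h1 i).symm
    · intro h
      exact ⟨fun i => (h i).symm, fun c _ => trivial⟩
  rw [Finset.sum_congr rfl hterm, Finset.sum_ite_eq' _ (fun i : Fin (m+1) => ν.count i) (fun _ => 1)]
  have hsum : ∑ i : Fin (m + 1), ν.count i = ν.length := by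
    have := Multiset.sum_count_eq_card (s := (Finset.univ : Finset (Fin (m+1))))
      (m := (↑ν : Multiset (Fin (m+1)))) (fun a _ => Finset.mem_univ a)
    simpa using this
  have hmem : ((fun i : Fin (m+1) => ν.count i) ∈ Finset.Nat.antidiagonalTuple (m + 1) k)
      ↔ ν.length = k := by
    rw [Finset.Nat.mem_antidiagonalTuple, hsum]
  by_cases hlen : ν.length = k
  · rw [if_pos (hmem.2 hlen)]
    set v : List.Vector (Fin (m+1)) k := ⟨ν, hlen⟩ with hv
    have : ν = List.Vector.toList v := rfl
    rw [this, Multiset.count_map_eq_count' _ _ List.Vector.toList_injective]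
    exact Multiset.count_eq_one_of_mem Finset.univ.nodup (Finset.mem_univ _)
  · rw [if_neg (fun h => hlen (hmem.1 h)), Multiset.count_eq_zero]
    intro hmem'
    obtain ⟨v, -, hv⟩ := Multiset.mem_map.1 hmem'
    exact hlen (hv ▸ v.toList_length)
end

section
/- The number of Lyndon words of length n over an alphabet of cardinality q equals (1/n) Σ_{d | n} μ(d) q^{n/d}, where μ is the Möbius function. -/
/-- A nonempty word `w` over a linearly ordered alphabet is a Lyndon word if for
every factorization `w = ξ ++ ν` with `ξ, ν` nonempty, `w < ν ++ ξ` in the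
lexicographic order. -/
def IsLyndon {α : Type*} [LinearOrder α] (w : List α) : Prop :=
  w ≠ [] ∧ ∀ ξ ν : List α, ξ ≠ [] → ν ≠ [] → w = ξ ++ ν → w < ν ++ ξ

namespace LyndonAux

open List

section Words

variable {α : Type*}

/-- `k`-fold concatenation of a list with itself. -/
def pw (l : List α) : ℕ → List α
  | 0 => []
  | k + 1 => l ++ pw l k

@[simp] lemma pw_zero (l : List α) : pw l 0 = [] := rfl

lemma pw_succ (l : List α) (k : ℕ) : pw l (k + 1) = l ++ pw l k := rfl

@[simp] lemma length_pw (l : List α) (k : ℕ) : (pw l k).length = k * l.length := by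
  induction k with
  | zero => simp [pw]
  | succ k ih => simp [pw, ih, Nat.succ_mul]; ring

lemma shuffle (a b : List α) : ∀ k, pw (a ++ b) k ++ a = a ++ pw (b ++ a) k
  | 0 => by simp
  | k + 1 => by
    simp only [pw_succ, append_assoc]
    rw [shuffle a b k]

lemma pw_succ' (l : List α) (k : ℕ) : pw l (k + 1) = pw l k ++ l := by
  induction k with
  | zero => simp [pw]
  | succ k ih =>
    calc pw l (k + 1 + 1) = l ++ pw l (k + 1) := rfl
      _ = l ++ (pw l k ++ l) := by rw [ih]
      _ = (l ++ pw l k) ++ l := (append_assoc _ _ _).symm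
      _ = pw l (k + 1) ++ l := rfl

lemma take_pw (l : List α) (k : ℕ) : (pw l (k + 1)).take l.length = l := by
  rw [pw_succ, take_left]

lemma pw_inj {u v : List α} (hlen : u.length = v.length) {k : ℕ} (hk : 0 < k)
    (h : pw u k = pw v k) : u = v := by
  cases k with
  | zero => exact absurd hk (lt_irrefl 0)
  | succ k =>
    have h1 := take_pw u k
    have h2 := take_pw v k
    rw [← h1, ← h2, h, hlen]

lemma rotate_pw (l : List α) {i : ℕ} (k : ℕ) (h : i ≤ l.length) :
    (pw l k).rotate i = pw (l.rotate i) k := by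
  cases k with
  | zero => simp
  | succ k =>
    have hlen : i ≤ (pw l (k + 1)).length := by
      rw [length_pw]; exact le_trans h (Nat.le_mul_of_pos_left _ (Nat.succ_pos k))
    rw [rotate_eq_drop_append_take hlen, rotate_eq_drop_append_take h]
    rw [pw_succ, take_append_of_le_length h, drop_append_of_le_length h]
    have key : pw (l.drop i ++ l.take i) (k + 1)
        = l.drop i ++ pw l k ++ l.take i := by
      rw [pw_succ' (l.drop i ++ l.take i) k, ← append_assoc (pw _ k),
        shuffle (l.drop i) (l.take i) k, take_append_drop]
    rw [key]

lemma rotate_mul {l : List α} {d : ℕ} (h : l.rotate d = l) (c : ℕ) :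
    l.rotate (c * d) = l := by
  induction c with
  | zero => simp
  | succ c ih => rw [Nat.succ_mul, ← rotate_rotate, ih, h]

lemma rotate_mod_period {l : List α} {d : ℕ} (h : l.rotate d = l) (k : ℕ) :
    l.rotate k = l.rotate (k % d) := by
  conv_lhs => rw [← Nat.div_add_mod k d]
  rw [Nat.mul_comm, ← rotate_rotate, rotate_mul h]

lemma eq_pw_of_rotate {l : List α} {d : ℕ} (hd : 0 < d) (hdvd : d ∣ l.length)
    (h : l.rotate d = l) : l = pw (l.take d) (l.length / d) := by
  have key : ∀ k, k * d ≤ l.length → l.take (k * d) = pw (l.take d) k := by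
    intro k
    induction k with
    | zero => simp
    | succ k ih =>
      intro hk
      have h1 : d ≤ l.length := le_trans (Nat.le_add_left _ _) (by
        rw [Nat.succ_mul] at hk; exact hk)
      have h2 : k * d ≤ l.length - d := by
        rw [Nat.succ_mul] at hk; omega
      have hrot : l.drop d ++ l.take d = l := by
        rw [← rotate_eq_drop_append_take h1, h]
      have hdl : k * d ≤ (l.drop d).length := by rw [length_drop]; exact h2
      calc l.take ((k + 1) * d) = l.take (d + k * d) := by ring_nf
        _ = l.take d ++ (l.drop d).take (k * d) := take_add
        _ = l.take d ++ ((l.drop d ++ l.take d).take (k * d)) := by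
            rw [take_append_of_le_length hdl]
        _ = l.take d ++ l.take (k * d) := by rw [hrot]
        _ = l.take d ++ pw (l.take d) k := by rw [ih (le_trans h2 (Nat.sub_le _ _))]
        _ = pw (l.take d) (k + 1) := (pw_succ _ _).symm
  have := key (l.length / d) (by rw [Nat.div_mul_cancel hdvd])
  rw [Nat.div_mul_cancel hdvd, take_length] at this
  rw [← this]

end Words

section Order

variable {α : Type*} [LinearOrder α]

lemma lex_append {u v : List α} (s t : List α) (hlen : u.length = v.length)
    (h : List.Lex (· < ·) u v) : List.Lex (· < ·) (u ++ s) (v ++ t) := by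
  induction h with
  | nil => simp at hlen
  | @cons a l₁ l₂ h ih =>
    exact List.Lex.cons (ih (by simpa using hlen))
  | rel h => exact List.Lex.rel h

lemma lt_append {u v : List α} (s t : List α) (hlen : u.length = v.length)
    (h : u < v) : u ++ s < v ++ t :=
  lex_append s t hlen h

lemma pw_lt_pw {u v : List α} (hlen : u.length = v.length) {k : ℕ} (hk : 0 < k)
    (h : u < v) : pw u k < pw v k := by
  cases k with
  | zero => exact absurd hk (lt_irrefl 0)
  | succ k =>
    rw [pw_succ, pw_succ]
    exact lt_append _ _ hlen h

lemma pw_le_pw {u v : List α} (hlen : u.length = v.length) (k : ℕ)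
    (h : u ≤ v) : pw u k ≤ pw v k := by
  rcases eq_or_lt_of_le h with rfl | hlt
  · exact le_refl _
  · rcases Nat.eq_zero_or_pos k with rfl | hk
    · simp
    · exact le_of_lt (pw_lt_pw hlen hk hlt)

lemma lt_of_pw_lt {u v : List α} (hlen : u.length = v.length) {k : ℕ}
    (h : pw u k < pw v k) : u < v := by
  have hk : 0 < k := by
    rcases Nat.eq_zero_or_pos k with rfl | hk
    · exfalso
      rw [pw_zero, pw_zero] at h
      exact lt_irrefl _ h
    · exact hk
  rcases lt_trichotomy u v with hlt | rfl | hgt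
  · exact hlt
  · exact absurd h (lt_irrefl _)
  · exact absurd (lt_trans h (pw_lt_pw hlen.symm hk hgt)) (lt_irrefl _)

lemma isLyndon_iff_rotate {l : List α} :
    IsLyndon l ↔ l ≠ [] ∧ ∀ i, 0 < i → i < l.length → l < l.rotate i := by
  constructor
  · rintro ⟨hne, h⟩
    refine ⟨hne, fun i h0 hi => ?_⟩
    have htake : (l.take i) ≠ [] := by
      apply List.ne_nil_of_length_pos
      rw [length_take]; omega
    have hdrop : (l.drop i) ≠ [] := by
      apply List.ne_nil_of_length_pos
      rw [length_drop]; omega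
    have := h (l.take i) (l.drop i) htake hdrop (take_append_drop i l).symm
    rwa [rotate_eq_drop_append_take hi.le]
  · rintro ⟨hne, h⟩
    refine ⟨hne, fun ξ ν hξ hν hw => ?_⟩
    have hi : l.rotate ξ.length = ν ++ ξ := by
      rw [hw, rotate_eq_drop_append_take (by simp), drop_left, take_left]
    have h0 : 0 < ξ.length := List.length_pos_iff.2 hξ
    have hlt : ξ.length < l.length := by
      rw [hw, length_append]
      have := List.length_pos_iff.2 hν
      omega
    have := h ξ.length h0 hlt
    rwa [hi] at this

lemma lyndon_length_pos {l : List α} (h : IsLyndon l) : 0 < l.length :=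
  List.length_pos_iff.2 h.1

/-- No nontrivial rotation fixes a rotation of a Lyndon word. -/
lemma rotate_rotate_ne {ℓ : List α} (h : IsLyndon ℓ) {i t : ℕ} (hi : i ≤ ℓ.length)
    (ht0 : 0 < t) (htd : t < ℓ.length) (hrot : (ℓ.rotate i).rotate t = ℓ.rotate i) :
    False := by
  have h1 : (ℓ.rotate i).rotate (ℓ.length - i) = ℓ := by
    rw [rotate_rotate, Nat.add_sub_cancel' hi, rotate_length]
  have h2 : ℓ.rotate t = ℓ := by
    have e1 : (ℓ.rotate i).rotate (t + (ℓ.length - i)) = ℓ := by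
      rw [← rotate_rotate, hrot, h1]
    have e2 : (ℓ.rotate i).rotate (t + (ℓ.length - i)) = ℓ.rotate t := by
      rw [rotate_rotate]
      have hidx : i + (t + (ℓ.length - i)) = ℓ.length + t := by omega
      rw [hidx, ← rotate_rotate, rotate_length]
    exact e2.symm.trans e1
  have := (isLyndon_iff_rotate.1 h).2 t ht0 htd
  rw [h2] at this
  exact lt_irrefl _ this

section Structure

variable {ℓ : List α} (h : IsLyndon ℓ) {i e : ℕ}

lemma rotate_pw_rotate (hd : 0 < ℓ.length) (i e k : ℕ) :
    (pw (ℓ.rotate i) e).rotate k = pw (ℓ.rotate ((i + k) % ℓ.length)) e := by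
  have hper : (pw (ℓ.rotate i) e).rotate ℓ.length = pw (ℓ.rotate i) e := by
    rw [rotate_pw _ e (by rw [length_rotate]), rotate_rotate, ← rotate_mod,
      Nat.add_mod_right, rotate_mod]
  rw [rotate_mod_period hper k,
    rotate_pw _ e (by rw [length_rotate]; exact (Nat.mod_lt _ hd).le),
    rotate_rotate, ← rotate_mod, Nat.add_mod_mod]

include h

lemma le_rotate_pw (hi : i < ℓ.length) (e k : ℕ) :
    pw ℓ e ≤ (pw (ℓ.rotate i) e).rotate k := by
  have hd := lyndon_length_pos h
  rw [rotate_pw_rotate hd i e k]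
  set j := (i + k) % ℓ.length with hj
  have hjd : j < ℓ.length := Nat.mod_lt _ hd
  have : ℓ ≤ ℓ.rotate j := by
    rcases Nat.eq_zero_or_pos j with hj0 | hj0
    · rw [hj0, rotate_zero]
    · exact le_of_lt ((isLyndon_iff_rotate.1 h).2 j hj0 hjd)
  exact pw_le_pw (by rw [length_rotate]) e this

lemma rotate_pw_attains (hi : i < ℓ.length) (e : ℕ) :
    (pw (ℓ.rotate i) e).rotate (ℓ.length - i) = pw ℓ e := by
  have hd := lyndon_length_pos h
  rw [rotate_pw_rotate hd, Nat.add_sub_cancel' hi.le, Nat.mod_self, rotate_zero]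

lemma rotate_pw_ne (hi : i < ℓ.length) (he : 0 < e) {k : ℕ} (hk0 : 0 < k)
    (hkd : k < ℓ.length) : (pw (ℓ.rotate i) e).rotate k ≠ pw (ℓ.rotate i) e := by
  intro hcon
  rw [rotate_pw _ e (by rw [length_rotate]; exact hkd.le)] at hcon
  have := pw_inj (by simp) he hcon
  exact rotate_rotate_ne h hi.le hk0 hkd this

lemma rotate_pw_period (hi : i < ℓ.length) (e : ℕ) :
    (pw (ℓ.rotate i) e).rotate ℓ.length = pw (ℓ.rotate i) e := by
  have hd := lyndon_length_pos h
  rw [rotate_pw_rotate hd, Nat.add_mod_right, rotate_mod]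

end Structure

/-- Surjectivity: every nonempty word decomposes as a repeated rotation of a
Lyndon word. -/
lemma exists_lyndon_decomp (w : List α) (hw : w ≠ []) :
    ∃ d ℓ i, d ∣ w.length ∧ ℓ.length = d ∧ IsLyndon ℓ ∧ i < d ∧
      w = pw (ℓ.rotate i) (w.length / d) := by
  classical
  set n := w.length with hn
  have hn0 : 0 < n := List.length_pos_iff.2 hw
  obtain ⟨j, hjmem, hjmin⟩ := Finset.exists_min_image (Finset.range n)
    (fun k => w.rotate k) ⟨0, Finset.mem_range.2 hn0⟩
  set m := w.rotate j with hm
  have hmlen : m.length = n := by rw [hm, length_rotate]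
  have hm_all : ∀ k, m ≤ w.rotate k := by
    intro k
    have h2 := hjmin (k % n) (Finset.mem_range.2 (Nat.mod_lt _ hn0))
    rw [← rotate_mod w k, ← hn]
    exact h2
  have hmm : ∀ k, m ≤ m.rotate k := fun k => by
    rw [hm, rotate_rotate]; exact hm_all _
  have hP : ∃ k, 0 < k ∧ m.rotate k = m := ⟨n, hn0, by rw [← hmlen, rotate_length]⟩
  obtain ⟨hd0, hrotd⟩ := Nat.find_spec hP
  set d := Nat.find hP with hd
  have hdn : d ≤ n := Nat.find_min' hP ⟨hn0, by rw [← hmlen, rotate_length]⟩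
  have hdvd : d ∣ n := by
    rcases Nat.eq_zero_or_pos (n % d) with h0 | hpos
    · exact Nat.dvd_of_mod_eq_zero h0
    · exfalso
      have hrn : m.rotate (n % d) = m := by
        rw [← rotate_mod_period hrotd n, ← hmlen, rotate_length]
      exact Nat.find_min hP (by rw [← hd]; exact Nat.mod_lt _ hd0) ⟨hpos, hrn⟩
  set ℓ := m.take d with hℓ
  have hℓlen : ℓ.length = d := by rw [hℓ, length_take, hmlen]; omega
  have hmpw : m = pw ℓ (n / d) := by
    have := eq_pw_of_rotate hd0 (by rw [hmlen]; exact hdvd) hrotd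
    rwa [hmlen] at this
  have he : 0 < n / d := Nat.div_pos hdn hd0
  have hLyn : IsLyndon ℓ := by
    rw [isLyndon_iff_rotate]
    refine ⟨List.ne_nil_of_length_pos (by omega), fun t ht0 htd => ?_⟩
    rw [hℓlen] at htd
    have hne : m.rotate t ≠ m := fun hc =>
      Nat.find_min hP (by rw [← hd]; exact htd) ⟨ht0, hc⟩
    have hlt : m < m.rotate t := lt_of_le_of_ne (hmm t) (Ne.symm hne)
    have hrt : m.rotate t = pw (ℓ.rotate t) (n / d) := by
      rw [hmpw, rotate_pw _ _ (by rw [hℓlen]; exact htd.le)]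
    rw [hrt, hmpw] at hlt
    exact lt_of_pw_lt (by rw [length_rotate]) hlt
  have hjn : j < n := Finset.mem_range.1 hjmem
  have hwm : w = m.rotate (n - j) := by
    rw [hm, rotate_rotate, Nat.add_sub_cancel' hjn.le, hn, rotate_length]
  set i := (n - j) % d with hi
  have hid : i < d := Nat.mod_lt _ hd0
  refine ⟨d, ℓ, i, hdvd, hℓlen, hLyn, hid, ?_⟩
  rw [hwm, rotate_mod_period hrotd, ← hi, hmpw,
    rotate_pw _ _ (by rw [hℓlen]; exact hid.le)]

lemma rotate_eq_rotate_lyndon {ℓ : List α} (h : IsLyndon ℓ) {i i' : ℕ}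
    (hi : i < ℓ.length) (hi' : i' < ℓ.length) (heq : ℓ.rotate i = ℓ.rotate i') :
    i = i' := by
  rcases le_total i i' with hle | hle
  · rcases Nat.eq_zero_or_pos (i' - i) with h0 | hpos
    · omega
    · exfalso
      apply rotate_rotate_ne h hi.le hpos (by omega)
      rw [rotate_rotate, Nat.add_sub_cancel' hle, heq]
  · rcases Nat.eq_zero_or_pos (i - i') with h0 | hpos
    · omega
    · exfalso
      apply rotate_rotate_ne h hi'.le hpos (by omega)
      rw [rotate_rotate, Nat.add_sub_cancel' hle, ← heq]

/-- Injectivity of the decomposition. -/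
lemma decomp_unique {ℓ ℓ' : List α} (h : IsLyndon ℓ) (h' : IsLyndon ℓ')
    {i i' e e' : ℕ} (hi : i < ℓ.length) (hi' : i' < ℓ'.length)
    (he : 0 < e) (he' : 0 < e')
    (heq : pw (ℓ.rotate i) e = pw (ℓ'.rotate i') e') :
    ℓ.length = ℓ'.length ∧ ℓ = ℓ' ∧ i = i' := by
  have hd := lyndon_length_pos h
  have hd' := lyndon_length_pos h'
  have hdd : ℓ.length = ℓ'.length := by
    rcases lt_trichotomy ℓ.length ℓ'.length with hlt | heqd | hgt
    · exfalso
      apply rotate_pw_ne h' hi' he' hd hlt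
      rw [← heq, rotate_pw_period h hi]
    · exact heqd
    · exfalso
      apply rotate_pw_ne h hi he hd' hgt
      rw [heq, rotate_pw_period h' hi']
  have hee : e = e' := by
    have := congrArg List.length heq
    simp only [length_pw, length_rotate] at this
    rw [hdd] at this
    exact Nat.eq_of_mul_eq_mul_right hd' this
  subst hee
  have hll : ℓ = ℓ' := by
    have h1 : pw ℓ e ≤ pw ℓ' e := by
      have := le_rotate_pw h hi e (ℓ'.length - i')
      rw [heq, rotate_pw_attains h' hi'] at this
      exact this
    have h2 : pw ℓ' e ≤ pw ℓ e := by
      have := le_rotate_pw h' hi' e (ℓ.length - i)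
      rw [← heq, rotate_pw_attains h hi] at this
      exact this
    exact pw_inj hdd he (le_antisymm h1 h2)
  subst hll
  refine ⟨rfl, rfl, ?_⟩
  have hrot : ℓ.rotate i = ℓ.rotate i' := pw_inj (by simp) he heq
  exact rotate_eq_rotate_lyndon h hi hi' hrot

end Order

section Count

/-- The number of Lyndon words of length `d` over `Fin q`. -/
noncomputable def L (q d : ℕ) : ℕ :=
  Nat.card {w : List.Vector (Fin q) d // IsLyndon w.toList}

lemma key_count (q n : ℕ) (hn : 1 ≤ n) :
    q ^ n = ∑ d ∈ n.divisors, d * L q d := by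
  classical
  have hn0 : n ≠ 0 := by omega
  -- the decomposition map
  set T := (Σ d : {x // x ∈ n.divisors},
    ({ℓ : List.Vector (Fin q) d.1 // IsLyndon ℓ.toList} × Fin d.1)) with hT
  have Fdef : ∀ (x : T), (pw (x.2.1.1.toList.rotate x.2.2.1) (n / x.1.1)).length = n := by
    rintro ⟨⟨d, hd⟩, ℓ, i⟩
    obtain ⟨hdvd, -⟩ := Nat.mem_divisors.1 hd
    simp only [length_pw, List.length_rotate, List.Vector.toList_length]
    exact Nat.div_mul_cancel hdvd
  set F : T → List.Vector (Fin q) n := fun x =>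
    ⟨pw (x.2.1.1.toList.rotate x.2.2.1) (n / x.1.1), Fdef x⟩ with hF
  have hFbij : Function.Bijective F := by
    constructor
    · rintro ⟨⟨d, hd⟩, ℓ, i⟩ ⟨⟨d', hd'⟩, ℓ', i'⟩ hFeq
      obtain ⟨hdvd, -⟩ := Nat.mem_divisors.1 hd
      obtain ⟨hdvd', -⟩ := Nat.mem_divisors.1 hd'
      have hd0 : 0 < d := Nat.pos_of_mem_divisors hd
      have hd0' : 0 < d' := Nat.pos_of_mem_divisors hd'
      have he : 0 < n / d := Nat.div_pos (Nat.le_of_dvd (by omega) hdvd) hd0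
      have he' : 0 < n / d' := Nat.div_pos (Nat.le_of_dvd (by omega) hdvd') hd0'
      have heq : pw (ℓ.1.toList.rotate i.1) (n / d)
          = pw (ℓ'.1.toList.rotate i'.1) (n / d') :=
        congrArg Subtype.val hFeq
      have hi : (i : ℕ) < ℓ.1.toList.length := by
        rw [List.Vector.toList_length]; exact i.2
      have hi' : (i' : ℕ) < ℓ'.1.toList.length := by
        rw [List.Vector.toList_length]; exact i'.2
      obtain ⟨hlen, hll, hii⟩ := decomp_unique ℓ.2 ℓ'.2 hi hi' he he' heq
      have h3 : ℓ.1.toList.length = d := List.Vector.toList_length ℓ.1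
      have h4 : ℓ'.1.toList.length = d' := List.Vector.toList_length ℓ'.1
      have hdd : d = d' := by rw [← h3, ← h4]; exact hlen
      subst hdd
      have : ℓ = ℓ' := Subtype.ext (List.Vector.toList_injective hll)
      subst this
      have : i = i' := Fin.ext hii
      subst this
      rfl
    · intro w
      have hwne : w.toList ≠ [] := by
        apply List.ne_nil_of_length_pos
        rw [List.Vector.toList_length]; omega
      obtain ⟨d, ℓl, i, hdvd, hℓlen, hLyn, hid, hdecomp⟩ :=
        exists_lyndon_decomp w.toList hwne
      rw [List.Vector.toList_length] at hdvd hdecomp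
      refine ⟨⟨⟨d, Nat.mem_divisors.2 ⟨hdvd, hn0⟩⟩, ⟨⟨ℓl, hℓlen⟩, hLyn⟩, ⟨i, hid⟩⟩, ?_⟩
      apply List.Vector.toList_injective
      exact hdecomp.symm
  have hcard : Nat.card T = Nat.card (List.Vector (Fin q) n) :=
    Nat.card_eq_of_bijective F hFbij
  have hVec : Nat.card (List.Vector (Fin q) n) = q ^ n := by
    rw [Nat.card_eq_fintype_card, card_vector, Fintype.card_fin]
  have hSig : Nat.card T = ∑ d ∈ n.divisors, d * L q d := by
    rw [hT, Nat.card_eq_fintype_card, Fintype.card_sigma]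
    rw [← Finset.sum_coe_sort n.divisors (fun d => d * L q d)]
    apply Finset.sum_congr rfl
    intro d _
    rw [Fintype.card_prod, Fintype.card_fin, L, Nat.card_eq_fintype_card, Nat.mul_comm]
  rw [← hVec, ← hcard, hSig]

end Count

end LyndonAux

open scoped ArithmeticFunction ArithmeticFunction.Moebius in
/-- The number of Lyndon words of length `n ≥ 1` over an alphabet of
cardinality `q` equals `(1/n) Σ_{d ∣ n} μ(d) q^{n/d}`, where `μ` is the Möbius
function. -/
theorem card_lyndon_eq_necklace_formula (q n : ℕ) (hn : 1 ≤ n) :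
    (Nat.card {w : List.Vector (Fin q) n // IsLyndon w.toList} : ℚ) =
      (1 / (n : ℚ)) * ∑ d ∈ n.divisors, (μ d : ℚ) * (q : ℚ) ^ (n / d) := by
  have hmain : ∀ m > 0, ∑ d ∈ Nat.divisors m, ((d : ℚ) * (LyndonAux.L q d : ℚ))
      = (q : ℚ) ^ m := by
    intro m hm
    have hkey := LyndonAux.key_count q m hm
    have hcast := congrArg (fun x : ℕ => (x : ℚ)) hkey
    push_cast at hcast
    rw [← hcast]
  have hinv := (ArithmeticFunction.sum_eq_iff_sum_smul_moebius_eq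
    (R := ℚ) (f := fun d => (d : ℚ) * (LyndonAux.L q d : ℚ))
    (g := fun m => (q : ℚ) ^ m)).1 hmain n (by omega)
  have hanti : ∑ x ∈ n.divisorsAntidiagonal, (μ x.1 : ℤ) • ((q : ℚ) ^ x.2)
      = ∑ d ∈ n.divisors, (μ d : ℚ) * (q : ℚ) ^ (n / d) := by
    rw [← Nat.sum_divisorsAntidiagonal (fun a b => (μ a : ℚ) * (q : ℚ) ^ b)]
    apply Finset.sum_congr rfl
    intro x _
    rw [zsmul_eq_mul]
  have hnQ : (n : ℚ) ≠ 0 := by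
    have : (0 : ℚ) < n := by exact_mod_cast hn
    exact ne_of_gt this
  show ((LyndonAux.L q n : ℕ) : ℚ) = _
  calc ((LyndonAux.L q n : ℕ) : ℚ)
      = 1 / (n : ℚ) * ((n : ℚ) * (LyndonAux.L q n : ℚ)) := by field_simp
    _ = 1 / (n : ℚ) * ∑ x ∈ n.divisorsAntidiagonal, (μ x.1 : ℤ) • ((q : ℚ) ^ x.2) := by
        rw [hinv]
    _ = 1 / (n : ℚ) * ∑ d ∈ n.divisors, (μ d : ℚ) * (q : ℚ) ^ (n / d) := by
        rw [hanti]
end
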